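/- In the m-gluing graph K_n +_m K'_n with n ≥ 5 and 1 ≤ m ≤ n−2, for any vertex u in V(K_n) \ (Γ_m(v_0) ∪ {u_0}): ((2−n)m + n² − 2n + 2)/((n−1)(n+m)) ≥ κ(u_0, u), and κ(u_0, u) ≥ ((2−n)m + n² − 3n + 3)/((n−1)(n+m)) if m < n−2, while κ(u_0, u) ≥ 1/(n−1) if m = n−2. In particular, κ(u_0, u) ≥ 0 when m ≤ n−2. -/

import Mathlib

open scoped Classical
noncomputable section

namespace OR

variable {V : Type*}

/-- The degree of a vertex. -/
def deg (G : SimpleGraph V) (x : V) : ℕ := Nat.card (G.neighborSet x)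

/-- The simple random walk measure at a vertex. -/
def rw (G : SimpleGraph V) (x : V) : V → ℝ :=
  fun v => if G.Adj x v then ((deg G x : ℝ))⁻¹ else 0

/-- A coupling between two measures on the vertex set. -/
def IsCoupling (μ ν : V → ℝ) (A : V → V → ℝ) : Prop :=
  (∀ u v, 0 ≤ A u v) ∧
  (Function.support fun p : V × V => A p.1 p.2).Finite ∧
  (∀ u, ∑ᶠ v, A u v = μ u) ∧ (∀ v, ∑ᶠ u, A u v = ν v)

/-- The 1-Wasserstein distance w.r.t. the graph distance. -/
def W (G : SimpleGraph V) (μ ν : V → ℝ) : ℝ :=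
  sInf { r | ∃ A, IsCoupling μ ν A ∧ r = ∑ᶠ u, ∑ᶠ v, A u v * (G.dist u v : ℝ) }

/-- The Ollivier–Ricci curvature. -/
def ricci (G : SimpleGraph V) (x y : V) : ℝ :=
  1 - W G (rw G x) (rw G y) / (G.dist x y : ℝ)

/-- The number of common neighbours of `x` and `y`. -/
def tri (G : SimpleGraph V) (x y : V) : ℕ := Nat.card {w | G.Adj x w ∧ G.Adj y w}



/-- Condition for a cross edge `u_i v_j` in the `m`-gluing graph. -/
def cross (m : ℕ) {n : ℕ} (i j : Fin n) : Prop :=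
  ((i : ℕ) = 0 ∧ (j : ℕ) = 0) ∨ ((i : ℕ) = 0 ∧ 1 ≤ (j : ℕ) ∧ (j : ℕ) ≤ m) ∨
    ((j : ℕ) = 0 ∧ 1 ≤ (i : ℕ) ∧ (i : ℕ) ≤ m)

/-- Adjacency of the `m`-gluing graph: `Sum.inl` is `K_n`, `Sum.inr` is `K'_n`. -/
def glueAdj (n m : ℕ) : Fin n ⊕ Fin n → Fin n ⊕ Fin n → Prop
  | .inl i, .inl j => i ≠ j
  | .inr i, .inr j => i ≠ j
  | .inl i, .inr j => cross m i j
  | .inr j, .inl i => cross m i j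

/-- The `m`-gluing graph `K_n +_m K'_n`. -/
def glue (n m : ℕ) : SimpleGraph (Fin n ⊕ Fin n) where
  Adj := glueAdj n m
  symm := by
    constructor
    rintro (i | i) (j | j) h <;> simp only [glueAdj] at h ⊢
    · exact h.symm
    · exact h
    · exact h
    · exact h.symm
  loopless := by
    constructor
    rintro (i | i) h <;> simp only [glueAdj] at h <;> exact h rfl


variable [Fintype V]


lemma W_le {G : SimpleGraph V} {μ ν : V → ℝ} {A : V → V → ℝ} (hA : IsCoupling μ ν A) :
    W G μ ν ≤ ∑ᶠ u, ∑ᶠ v, A u v * (G.dist u v : ℝ) := by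
  apply csInf_le
  · refine ⟨0, ?_⟩
    rintro r ⟨B, hB, rfl⟩
    rw [finsum_eq_sum_of_fintype]
    apply Finset.sum_nonneg
    intro i _
    rw [finsum_eq_sum_of_fintype]
    apply Finset.sum_nonneg
    intro j _
    exact mul_nonneg (hB.1 i j) (by positivity)
  · exact ⟨A, hA, rfl⟩

lemma le_W {G : SimpleGraph V} {μ ν : V → ℝ} {A₀ : V → V → ℝ} (hA₀ : IsCoupling μ ν A₀)
    (f : V → ℝ) (hf : ∀ p q, f p - f q ≤ (G.dist p q : ℝ)) :
    (∑ p, f p * μ p) - ∑ q, f q * ν q ≤ W G μ ν := by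
  apply le_csInf
  · exact ⟨_, A₀, hA₀, rfl⟩
  rintro r ⟨A, hA, rfl⟩
  have key : ∀ u v, A u v * (f u - f v) ≤ A u v * (G.dist u v : ℝ) := fun u v =>
    mul_le_mul_of_nonneg_left (hf u v) (hA.1 u v)
  calc (∑ p, f p * μ p) - ∑ q, f q * ν q
      = ∑ p, ∑ q, A p q * (f p - f q) := by
        simp only [← hA.2.2.1, ← hA.2.2.2, finsum_eq_sum_of_fintype]
        rw [show (∑ x : V, f x * ∑ u : V, A u x) = ∑ u : V, ∑ x : V, f x * A u x by
          rw [Finset.sum_comm]; simp [Finset.mul_sum]]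
        simp only [Finset.mul_sum, ← Finset.sum_sub_distrib]
        congr 1; ext p; congr 1; ext q; ring
    _ ≤ ∑ p, ∑ q, A p q * (G.dist p q : ℝ) := by
        apply Finset.sum_le_sum; intro p _; apply Finset.sum_le_sum; intro q _; exact key p q
    _ = ∑ᶠ u, ∑ᶠ v, A u v * (G.dist u v : ℝ) := by
        simp only [finsum_eq_sum_of_fintype]
end OR

namespace GlueAux
open Finset

/-- cardinality of `{a < n | P a}` with a fixed decidability instance. -/
def cnt (n : ℕ) (P : ℕ → Prop) : ℕ := ((Finset.range n).filter P).card

lemma filter_inst {α : Type*} (P : α → Prop) (i1 i2 : DecidablePred P) (s : Finset α) :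
    @Finset.filter α P i1 s = @Finset.filter α P i2 s := by congr!

lemma filter_val_card {n : ℕ} (P : ℕ → Prop) (inst : DecidablePred fun j : Fin n => P (j : ℕ)) :
    (@Finset.filter (Fin n) (fun j : Fin n => P (j : ℕ)) inst (univ : Finset (Fin n))).card
      = cnt n P := by
  rw [filter_inst _ inst (fun j => Classical.propDecidable _)]
  have : ((univ : Finset (Fin n)).filter fun j : Fin n => P (j : ℕ)).map Fin.valEmbedding
      = (Finset.range n).filter P := by
    ext a
    simp only [Finset.mem_map, Finset.mem_filter, Finset.mem_univ, true_and, Finset.mem_range,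
      Fin.valEmbedding_apply]
    constructor
    · rintro ⟨j, hj, rfl⟩; exact ⟨j.isLt, hj⟩
    · rintro ⟨ha, hP⟩; exact ⟨⟨a, ha⟩, hP, rfl⟩
  rw [cnt, ← this, Finset.card_map]
  congr!

lemma cnt_eq {n : ℕ} {P : ℕ → Prop} (inst : DecidablePred P) :
    cnt n P = (@Finset.filter ℕ P inst (Finset.range n)).card := by
  rw [cnt, filter_inst P _ inst]

lemma sum_ite_val {n : ℕ} (P : ℕ → Prop) (r : ℝ) :
    (∑ j : Fin n, if P (j : ℕ) then r else 0) = (cnt n P : ℝ) * r := by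
  rw [← Finset.sum_filter, Finset.sum_const, nsmul_eq_mul, filter_val_card]

/-- `ite` with a pinned (classical) decidability instance. -/
def IT (P : Prop) (r : ℝ) : ℝ := if P then r else 0

lemma IT_pos {P : Prop} (h : P) (r : ℝ) : IT P r = r := if_pos h
lemma IT_neg {P : Prop} (h : ¬ P) (r : ℝ) : IT P r = 0 := if_neg h

lemma sum_IT {n : ℕ} (P : ℕ → Prop) (r : ℝ) :
    (∑ j : Fin n, IT (P (j : ℕ)) r) = (cnt n P : ℝ) * r :=
  sum_ite_val P r

lemma natCard_fin_subtype {n : ℕ} (Q : Fin n → Prop) (P : ℕ → Prop)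
    (h : ∀ j : Fin n, Q j ↔ P (j : ℕ)) :
    Nat.card {j : Fin n // Q j} = cnt n P := by
  have e : Nat.card {j : Fin n // Q j} = Nat.card {j : Fin n // P (j : ℕ)} :=
    Nat.card_congr (Equiv.subtypeEquivRight h)
  rw [e, Nat.card_eq_fintype_card, Fintype.card_subtype, filter_val_card P _]

lemma natCard_sum_subtype {n : ℕ} (p : Fin n ⊕ Fin n → Prop) :
    Nat.card {v // p v}
      = Nat.card {j : Fin n // p (.inl j)} + Nat.card {j : Fin n // p (.inr j)} := by
  rw [Nat.card_congr (Equiv.subtypeSum (p := p)), Nat.card_sum]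
section Glue
variable {n m : ℕ}

lemma adj_ll {i j : Fin n} : (OR.glue n m).Adj (.inl i) (.inl j) ↔ i ≠ j := Iff.rfl
lemma adj_lr {i j : Fin n} : (OR.glue n m).Adj (.inl i) (.inr j) ↔ OR.cross m i j := Iff.rfl
lemma adj_rl {i j : Fin n} : (OR.glue n m).Adj (.inr j) (.inl i) ↔ OR.cross m i j := Iff.rfl
lemma adj_rr {i j : Fin n} : (OR.glue n m).Adj (.inr i) (.inr j) ↔ i ≠ j := Iff.rfl

lemma cross_iff {i j : Fin n} : OR.cross m i j ↔
    (((i : ℕ) = 0 ∧ (j : ℕ) = 0) ∨ ((i : ℕ) = 0 ∧ 1 ≤ (j : ℕ) ∧ (j : ℕ) ≤ m) ∨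
    ((j : ℕ) = 0 ∧ 1 ≤ (i : ℕ) ∧ (i : ℕ) ≤ m)) := Iff.rfl

lemma ne_iff_val {i j : Fin n} : i ≠ j ↔ ¬ (i : ℕ) = (j : ℕ) := by
  simp [Fin.ext_iff]

lemma x0_val (hn : 5 ≤ n) : ((⟨0, by omega⟩ : Fin n) : ℕ) = 0 := rfl

variable (hn : 5 ≤ n) (hm : 1 ≤ m) (hmn : m ≤ n - 2)

/-- the vertex u₀ -/
abbrev x0 (hn : 5 ≤ n) : Fin n := ⟨0, Nat.lt_of_lt_of_le (by decide) hn⟩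

lemma cnt_ne_zero : cnt n (fun a => ¬ a = 0) = n - 1 := by
  rw [cnt_eq inferInstance]
  have : ((Finset.range n).filter fun a => ¬ a = 0) = Finset.Ico 1 n := by
    ext a
    simp only [Finset.mem_filter, Finset.mem_range, Finset.mem_Ico]
    omega
  rw [this, Nat.card_Ico]

lemma cnt_le_m (h : m + 1 < n) : cnt n (fun a => a ≤ m) = m + 1 := by
  rw [cnt_eq inferInstance]
  have : ((Finset.range n).filter fun a => a ≤ m) = Finset.range (m + 1) := by
    ext a
    simp only [Finset.mem_filter, Finset.mem_range]
    omega
  rw [this, Finset.card_range]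

lemma cnt_eq_single {t : ℕ} (ht : t < n) : cnt n (fun a => a = t) = 1 := by
  rw [cnt_eq inferInstance]
  have : ((Finset.range n).filter fun a => a = t) = {t} := by
    ext a
    simp only [Finset.mem_filter, Finset.mem_range, Finset.mem_singleton]
    omega
  rw [this, Finset.card_singleton]

lemma cnt_ne_two {t : ℕ} (h1 : 1 ≤ t) (ht : t < n) :
    cnt n (fun a => ¬ a = 0 ∧ ¬ a = t) = n - 2 := by
  rw [cnt_eq inferInstance]
  have : ((Finset.range n).filter fun a => ¬ a = 0 ∧ ¬ a = t) = (Finset.Ico 1 n).erase t := by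
    ext a
    simp only [Finset.mem_filter, Finset.mem_range, Finset.mem_erase, Finset.mem_Ico]
    omega
  rw [this, Finset.card_erase_of_mem (by simp only [Finset.mem_Ico]; omega), Nat.card_Ico]
  omega

lemma cnt_false : cnt n (fun _ => False) = 0 := by
  rw [cnt_eq inferInstance]; simp

lemma cnt_ne_t {t : ℕ} (ht : t < n) : cnt n (fun a => ¬ a = t) = n - 1 := by
  rw [cnt_eq inferInstance]
  have : ((Finset.range n).filter fun a => ¬ a = t) = (Finset.range n).erase t := by
    ext a
    simp only [Finset.mem_filter, Finset.mem_range, Finset.mem_erase]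
    omega
  rw [this, Finset.card_erase_of_mem (by simp [ht]), Finset.card_range]

lemma deg_x (hmn : m ≤ n - 2) : OR.deg (OR.glue n m) (.inl (⟨0, by have := hmn; omega⟩ : Fin n)) = n + m := by
  have h1 : ∀ j : Fin n, (OR.glue n m).Adj (.inl (⟨0, by omega⟩ : Fin n)) (.inl j)
      ↔ ¬ (j : ℕ) = 0 := by
    intro j; rw [adj_ll, ne_iff_val, x0_val hn]; omega
  have h2 : ∀ j : Fin n, (OR.glue n m).Adj (.inl (⟨0, by omega⟩ : Fin n)) (.inr j)
      ↔ (j : ℕ) ≤ m := by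
    intro j; rw [adj_lr, cross_iff, x0_val hn]; omega
  have e : OR.deg (OR.glue n m) (.inl (⟨0, by omega⟩ : Fin n))
      = Nat.card {v : Fin n ⊕ Fin n // (OR.glue n m).Adj (.inl (⟨0, by omega⟩ : Fin n)) v} := rfl
  rw [e, natCard_sum_subtype, natCard_fin_subtype _ (fun a => ¬ a = 0) h1,
    natCard_fin_subtype _ (fun a => a ≤ m) h2, cnt_ne_zero, cnt_le_m (by omega)]
  omega

lemma deg_y {u : Fin n} (hu : m < (u : ℕ)) : OR.deg (OR.glue n m) (.inl u) = n - 1 := by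
  have h1 : ∀ j : Fin n, (OR.glue n m).Adj (.inl u) (.inl j) ↔ ¬ (j : ℕ) = (u : ℕ) := by
    intro j; rw [adj_ll, ne_iff_val]; omega
  have h2 : ∀ j : Fin n, (OR.glue n m).Adj (.inl u) (.inr j) ↔ False := by
    intro j
    rw [adj_lr, cross_iff]
    exact ⟨fun h => by omega, False.elim⟩
  have e : OR.deg (OR.glue n m) (.inl u)
      = Nat.card {v : Fin n ⊕ Fin n // (OR.glue n m).Adj (.inl u) v} := rfl
  rw [e, natCard_sum_subtype, natCard_fin_subtype _ (fun a => ¬ a = (u:ℕ)) h1,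
    natCard_fin_subtype _ (fun _ => False) h2, cnt_false, cnt_ne_t u.isLt]
  omega

end Glue

section Stage4
variable {n m : ℕ}

lemma mu_l (hn : 5 ≤ n) (hm : 1 ≤ m) (hmn : m ≤ n - 2) (j : Fin n) :
    OR.rw (OR.glue n m) (.inl (⟨0, by have := hm; omega⟩ : Fin n)) (.inl j)
      = if ¬ (j : ℕ) = 0 then ((n : ℝ) + m)⁻¹ else 0 := by
  have h1 : (OR.glue n m).Adj (.inl (⟨0, by omega⟩ : Fin n)) (.inl j) ↔ ¬ (j : ℕ) = 0 := by
    rw [adj_ll, ne_iff_val, x0_val hn]; omega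
  simp only [OR.rw, deg_x hn hmn]
  rw [if_congr h1 rfl rfl]
  norm_num

lemma mu_r (hn : 5 ≤ n) (hm : 1 ≤ m) (hmn : m ≤ n - 2) (k : Fin n) :
    OR.rw (OR.glue n m) (.inl (⟨0, by have := hm; omega⟩ : Fin n)) (.inr k)
      = if (k : ℕ) ≤ m then ((n : ℝ) + m)⁻¹ else 0 := by
  have h1 : (OR.glue n m).Adj (.inl (⟨0, by omega⟩ : Fin n)) (.inr k) ↔ (k : ℕ) ≤ m := by
    rw [adj_lr, cross_iff, x0_val hn]; omega
  simp only [OR.rw, deg_x hn hmn]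
  rw [if_congr h1 rfl rfl]
  norm_num

lemma nu_l (hn : 5 ≤ n) {u : Fin n} (hu : m < (u : ℕ)) (j : Fin n) :
    OR.rw (OR.glue n m) (.inl u) (.inl j)
      = if ¬ (j : ℕ) = (u : ℕ) then ((n : ℝ) - 1)⁻¹ else 0 := by
  have h1 : (OR.glue n m).Adj (.inl u) (.inl j) ↔ ¬ (j : ℕ) = (u : ℕ) := by
    rw [adj_ll, ne_iff_val]; omega
  simp only [OR.rw, deg_y hu]
  rw [if_congr h1 rfl rfl]
  have : ((n - 1 : ℕ) : ℝ) = (n : ℝ) - 1 := by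
    have : (1 : ℕ) ≤ n := by omega
    push_cast [this]; ring
  rw [this]

lemma nu_r {u : Fin n} (hu : m < (u : ℕ)) (k : Fin n) :
    OR.rw (OR.glue n m) (.inl u) (.inr k) = 0 := by
  have h1 : ¬ (OR.glue n m).Adj (.inl u) (.inr k) := by
    rw [adj_lr, cross_iff]
    omega
  simp only [OR.rw, if_neg h1]

lemma reach (hn : 5 ≤ n) (p : Fin n ⊕ Fin n) :
    (OR.glue n m).Reachable (.inl (⟨0, by have := p; omega⟩ : Fin n)) p := by
  obtain j | k := p
  · by_cases hj : (⟨0, by omega⟩ : Fin n) = j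
    · rw [← hj]
    · exact (adj_ll.mpr hj).reachable
  · by_cases hk : (⟨0, by omega⟩ : Fin n) = k
    · exact (adj_lr.mpr (Or.inl ⟨rfl, by rw [← hk]⟩)).reachable
    · refine ((adj_lr.mpr (Or.inl ⟨rfl, rfl⟩)).reachable).trans
        ((adj_rr (i := (⟨0, by omega⟩ : Fin n)) (j := k)).mpr hk).reachable

lemma reach2 (hn : 5 ≤ n) (p q : Fin n ⊕ Fin n) : (OR.glue n m).Reachable p q :=
  (reach hn p).symm.trans (reach hn q)

lemma dist_one_le (hn : 5 ≤ n) {p q : Fin n ⊕ Fin n} (h : p ≠ q) :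
    1 ≤ (OR.glue n m).dist p q :=
  (reach2 hn p q).pos_dist_of_ne h

lemma dist_two_le (hn : 5 ≤ n) {k j : Fin n} (hk : ¬ (k : ℕ) = 0) (hj : ¬ (j : ℕ) = 0) :
    2 ≤ (OR.glue n m).dist (.inr k) (.inl j) := by
  have hne : (Sum.inr k : Fin n ⊕ Fin n) ≠ .inl j := by simp
  have h1 := dist_one_le (m := m) hn hne
  have h2 : ¬ (OR.glue n m).dist (.inr k) (.inl j) = 1 := by
    rw [SimpleGraph.dist_eq_one_iff_adj, adj_rl, cross_iff]
    omega
  omega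

lemma dist_le_two (hn : 5 ≤ n) {k j : Fin n} (hk : (k : ℕ) ≤ m) :
    (OR.glue n m).dist (.inr k) (.inl j) ≤ 2 := by
  have h1 : (OR.glue n m).Adj (.inr k) (.inl (⟨0, by omega⟩ : Fin n)) := by
    rw [adj_rl, cross_iff, x0_val hn]
    omega
  by_cases hj : (j : ℕ) = 0
  · have hadj : (OR.glue n m).Adj (.inr k) (.inl j) := by
      rw [adj_rl, cross_iff]
      omega
    calc (OR.glue n m).dist (.inr k) (.inl j) = 1 :=
          SimpleGraph.dist_eq_one_iff_adj.mpr hadj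
      _ ≤ 2 := by omega
  · have h2 : (OR.glue n m).Adj (.inl (⟨0, by omega⟩ : Fin n)) (.inl j) := by
      rw [adj_ll, ne_iff_val, x0_val hn]
      omega
    have := SimpleGraph.dist_le (SimpleGraph.Walk.cons h1 (SimpleGraph.Walk.cons h2 SimpleGraph.Walk.nil))
    simpa using this

lemma dist_ll_one (hn : 5 ≤ n) {j j' : Fin n} (h : ¬ (j : ℕ) = (j' : ℕ)) :
    (OR.glue n m).dist (.inl j) (.inl j') = 1 :=
  SimpleGraph.dist_eq_one_iff_adj.mpr (adj_ll.mpr (by rw [ne_iff_val]; omega))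

end Stage4

section Stage5
variable {n m : ℕ}

/-- The 1-Lipschitz potential function. -/
def F (n m : ℕ) (u : Fin n) : Fin n ⊕ Fin n → ℝ :=
  Sum.elim (fun j => if (j : ℕ) = 0 ∨ (j : ℕ) = (u : ℕ) then (1 : ℝ) else 0)
    (fun k => if (k : ℕ) = 0 then (1 : ℝ) else 2)

lemma F_lip (hn : 5 ≤ n) (hm : 1 ≤ m) {u : Fin n} (hu : m < (u : ℕ)) :
    ∀ p q, F n m u p - F n m u q ≤ ((OR.glue n m).dist p q : ℝ) := by
  intro p q
  by_cases hpq : p = q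
  · subst hpq
    simp
  · have hd1 : (1 : ℝ) ≤ ((OR.glue n m).dist p q : ℝ) := by
      exact_mod_cast dist_one_le (m := m) hn hpq
    have hd0 : (0 : ℝ) ≤ ((OR.glue n m).dist p q : ℝ) := by positivity
    rcases p with j | k <;> rcases q with j' | k' <;>
      simp only [F, Sum.elim_inl, Sum.elim_inr]
    · split_ifs <;> linarith
    · split_ifs <;> linarith
    · split_ifs with h1 h2 <;> try linarith
      -- remaining : 2 - 0 ≤ dist (inr k) (inl j')
      have h2' : (2 : ℝ) ≤ ((OR.glue n m).dist (.inr k) (.inl j') : ℝ) := by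
        exact_mod_cast dist_two_le (m := m) hn h1 (by omega)
      linarith
    · split_ifs <;> linarith

lemma cnt_ne_zero_le (h : m < n) : cnt n (fun a => ¬ a = 0 ∧ a ≤ m) = m := by
  rw [cnt_eq inferInstance]
  have : ((Finset.range n).filter fun a => ¬ a = 0 ∧ a ≤ m) = Finset.Icc 1 m := by
    ext a
    simp only [Finset.mem_filter, Finset.mem_range, Finset.mem_Icc]
    omega
  rw [this, Nat.card_Icc]
  omega

lemma sum_F_mu (hn : 5 ≤ n) (hm : 1 ≤ m) (hmn : m ≤ n - 2) {u : Fin n} (hu : m < (u : ℕ)) :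
    ∑ p : Fin n ⊕ Fin n, F n m u p * OR.rw (OR.glue n m) (.inl (⟨0, by omega⟩ : Fin n)) p
      = (2 * m + 2) * ((n : ℝ) + m)⁻¹ := by
  rw [Fintype.sum_sum_type]
  have e1 : ∀ j : Fin n, F n m u (.inl j)
        * OR.rw (OR.glue n m) (.inl (⟨0, by omega⟩ : Fin n)) (.inl j)
      = IT ((j : ℕ) = (u : ℕ)) ((n : ℝ) + m)⁻¹ := by
    intro j
    rw [mu_l hn hm hmn j]
    simp only [F, Sum.elim_inl, IT]
    split_ifs <;> first | ring1 | (exfalso; omega)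
  have e2 : ∀ k : Fin n, F n m u (.inr k)
        * OR.rw (OR.glue n m) (.inl (⟨0, by omega⟩ : Fin n)) (.inr k)
      = IT ((k : ℕ) = 0) ((n : ℝ) + m)⁻¹
        + IT (¬ (k : ℕ) = 0 ∧ (k : ℕ) ≤ m) (2 * ((n : ℝ) + m)⁻¹) := by
    intro k
    rw [mu_r hn hm hmn k]
    simp only [F, Sum.elim_inr, IT]
    split_ifs <;> first | ring1 | (exfalso; omega)
  rw [Finset.sum_congr rfl (fun j _ => e1 j), Finset.sum_congr rfl (fun k _ => e2 k),
    Finset.sum_add_distrib, sum_IT (fun a => a = (u : ℕ)) _,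
    sum_IT (fun a => a = 0) _, sum_IT (fun a => ¬ a = 0 ∧ a ≤ m) _,
    cnt_eq_single u.isLt, cnt_eq_single (by omega : 0 < n), cnt_ne_zero_le (by omega)]
  push_cast
  ring

lemma sum_F_nu (hn : 5 ≤ n) (hm : 1 ≤ m) (hmn : m ≤ n - 2) {u : Fin n} (hu : m < (u : ℕ)) :
    ∑ p : Fin n ⊕ Fin n, F n m u p * OR.rw (OR.glue n m) (.inl u) p = ((n : ℝ) - 1)⁻¹ := by
  rw [Fintype.sum_sum_type]
  have e1 : ∀ j : Fin n, F n m u (.inl j) * OR.rw (OR.glue n m) (.inl u) (.inl j)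
      = IT ((j : ℕ) = 0) ((n : ℝ) - 1)⁻¹ := by
    intro j
    rw [nu_l hn hu j]
    simp only [F, Sum.elim_inl, IT]
    split_ifs <;> first | ring1 | (exfalso; omega)
  have e2 : ∀ k : Fin n, F n m u (.inr k) * OR.rw (OR.glue n m) (.inl u) (.inr k) = 0 := by
    intro k
    rw [nu_r hu k, mul_zero]
  rw [Finset.sum_congr rfl (fun j _ => e1 j), Finset.sum_congr rfl (fun k _ => e2 k),
    sum_IT (fun a => a = 0) _, cnt_eq_single (by omega : 0 < n), Finset.sum_const_zero]
  push_cast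
  ring

end Stage5

section Stage6
variable {n m : ℕ}

lemma IT_nonneg {P : Prop} {r : ℝ} (hr : 0 ≤ r) : 0 ≤ IT P r := by
  unfold IT; split_ifs
  · exact hr
  · exact le_refl 0

lemma IT_congr {P Q : Prop} (r : ℝ) (h : P ↔ Q) : IT P r = IT Q r := by
  unfold IT; split_ifs with h1 h2 <;> first | rfl | tauto

lemma IT_and (A B : Prop) (r : ℝ) : IT (A ∧ B) r = IT A (IT B r) := by
  unfold IT; split_ifs <;> first | rfl | tauto

lemma IT_add_same (A : Prop) (x y : ℝ) : IT A x + IT A y = IT A (x + y) := by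
  unfold IT; split_ifs <;> ring

lemma sum_IT_out {ι : Type*} [Fintype ι] (A : Prop) (f : ι → ℝ) :
    (∑ i, IT A (f i)) = IT A (∑ i, f i) := by
  by_cases hA : A
  · simp only [IT_pos hA]
  · simp only [IT_neg hA, Finset.sum_const_zero]

lemma IT_false {P : Prop} (r : ℝ) (h : ¬ P) : IT P r = 0 := IT_neg h r

/-- coupling constants -/
noncomputable def aa (n m : ℕ) : ℝ := ((n : ℝ) + m)⁻¹
noncomputable def bb (n : ℕ) : ℝ := ((n : ℝ) - 1)⁻¹
noncomputable def cc1 (n m : ℕ) : ℝ := aa n m / ((n : ℝ) - 2)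
noncomputable def cc2 (n m : ℕ) : ℝ := bb n / ((m : ℝ) + 1)
noncomputable def cc3 (n m : ℕ) : ℝ := (aa n m - bb n / ((m : ℝ) + 1)) / ((n : ℝ) - 2)

/-- The generic coupling. -/
noncomputable def A1 (n m uv : ℕ) : Fin n ⊕ Fin n → Fin n ⊕ Fin n → ℝ
  | .inl j, .inl j' => IT ((j : ℕ) = (j' : ℕ) ∧ ¬ (j : ℕ) = 0 ∧ ¬ (j : ℕ) = uv) (aa n m)
      + IT ((j : ℕ) = uv ∧ ¬ (j' : ℕ) = 0 ∧ ¬ (j' : ℕ) = uv) (cc1 n m)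
  | .inr k, .inl j' => IT ((k : ℕ) ≤ m ∧ (j' : ℕ) = 0) (cc2 n m)
      + IT ((k : ℕ) ≤ m ∧ ¬ (j' : ℕ) = 0 ∧ ¬ (j' : ℕ) = uv) (cc3 n m)
  | _, _ => 0

section A1facts

lemma real_facts (hn : 5 ≤ n) (hm : 1 ≤ m) (hmn : m + 2 ≤ n) : (0:ℝ) < (n:ℝ) - 1 ∧ (0:ℝ) < (n:ℝ) - 2 ∧ (0:ℝ) < (n:ℝ) + m
    ∧ (1:ℝ) ≤ (m:ℝ) ∧ (m:ℝ) + 2 ≤ (n:ℝ) := by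
  have h5 : (5:ℝ) ≤ (n:ℝ) := by exact_mod_cast hn
  have h1 : (1:ℝ) ≤ (m:ℝ) := by exact_mod_cast hm
  have h2 : (m:ℝ) + 2 ≤ (n:ℝ) := by exact_mod_cast hmn
  refine ⟨by linarith, by linarith, by linarith, h1, h2⟩

lemma aa_nonneg (hn : 5 ≤ n) (hm : 1 ≤ m) (hmn : m + 2 ≤ n) : 0 ≤ aa n m := by
  obtain ⟨h1, h2, h3, h4, h5⟩ := real_facts hn hm hmn
  unfold aa; positivity

lemma bb_nonneg (hn : 5 ≤ n) (hm : 1 ≤ m) (hmn : m + 2 ≤ n) : 0 ≤ bb n := by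
  obtain ⟨h1, h2, h3, h4, h5⟩ := real_facts hn hm hmn
  unfold bb; positivity

lemma cc1_nonneg (hn : 5 ≤ n) (hm : 1 ≤ m) (hmn : m + 2 ≤ n) : 0 ≤ cc1 n m := by
  obtain ⟨h1, h2, h3, h4, h5⟩ := real_facts hn hm hmn
  unfold cc1 aa; positivity

lemma cc2_nonneg (hn : 5 ≤ n) (hm : 1 ≤ m) (hmn : m + 2 ≤ n) : 0 ≤ cc2 n m := by
  obtain ⟨h1, h2, h3, h4, h5⟩ := real_facts hn hm hmn
  unfold cc2 bb; positivity

lemma cc3_nonneg (hn : 5 ≤ n) (hm : 1 ≤ m) (hmn : m + 2 ≤ n) : 0 ≤ cc3 n m := by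
  obtain ⟨h1, h2, h3, h4, h5⟩ := real_facts hn hm hmn
  unfold cc3 aa bb
  apply div_nonneg _ (by linarith)
  rw [sub_nonneg, div_le_iff₀ (by linarith)]
  rw [inv_eq_one_div, inv_eq_one_div, div_mul_eq_mul_div, le_div_iff₀ (by linarith),
    one_div, inv_mul_le_iff₀ (by linarith)]
  nlinarith

lemma I1 (hn : 5 ≤ n) (hm : 1 ≤ m) (hmn : m + 2 ≤ n) : ((n:ℝ) - 2) * cc1 n m = aa n m := by
  obtain ⟨h1, h2, h3, h4, h5⟩ := real_facts hn hm hmn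
  unfold cc1; field_simp

lemma I2 (hn : 5 ≤ n) (hm : 1 ≤ m) (hmn : m + 2 ≤ n) : cc2 n m + ((n:ℝ) - 2) * cc3 n m = aa n m := by
  obtain ⟨h1, h2, h3, h4, h5⟩ := real_facts hn hm hmn
  unfold cc2 cc3 aa bb
  field_simp
  ring

lemma I3 (hn : 5 ≤ n) (hm : 1 ≤ m) (hmn : m + 2 ≤ n) : ((m:ℝ) + 1) * cc2 n m = bb n := by
  obtain ⟨h1, h2, h3, h4, h5⟩ := real_facts hn hm hmn
  unfold cc2; field_simp

lemma I4 (hn : 5 ≤ n) (hm : 1 ≤ m) (hmn : m + 2 ≤ n) : aa n m + cc1 n m + ((m:ℝ) + 1) * cc3 n m = bb n := by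
  obtain ⟨h1, h2, h3, h4, h5⟩ := real_facts hn hm hmn
  unfold cc1 cc3 aa bb
  field_simp
  ring

lemma Scost (hn : 5 ≤ n) (hm : 1 ≤ m) (hmn : m + 2 ≤ n) : ((n:ℝ) - 2) * cc1 n m + ((m:ℝ) + 1) * (cc2 n m + ((n:ℝ) - 2) * (2 * cc3 n m))
    = (2*(m:ℝ)+3) * aa n m - bb n := by
  obtain ⟨h1, h2, h3, h4, h5⟩ := real_facts hn hm hmn
  unfold cc1 cc2 cc3 aa bb
  field_simp
  ring

end A1facts
end Stage6

section Stage7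
variable {n m : ℕ}

lemma A1_ll {uv : ℕ} {j j' : Fin n} : A1 n m uv (.inl j) (.inl j')
    = IT ((j : ℕ) = (j' : ℕ) ∧ ¬ (j : ℕ) = 0 ∧ ¬ (j : ℕ) = uv) (aa n m)
      + IT ((j : ℕ) = uv ∧ ¬ (j' : ℕ) = 0 ∧ ¬ (j' : ℕ) = uv) (cc1 n m) := rfl
lemma A1_rl {uv : ℕ} {k j' : Fin n} : A1 n m uv (.inr k) (.inl j')
    = IT ((k : ℕ) ≤ m ∧ (j' : ℕ) = 0) (cc2 n m)
      + IT ((k : ℕ) ≤ m ∧ ¬ (j' : ℕ) = 0 ∧ ¬ (j' : ℕ) = uv) (cc3 n m) := rfl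
lemma A1_lr {uv : ℕ} {j k' : Fin n} : A1 n m uv (.inl j) (.inr k') = 0 := rfl
lemma A1_rr {uv : ℕ} {k k' : Fin n} : A1 n m uv (.inr k) (.inr k') = 0 := rfl

lemma cast_sub_two (hn : 5 ≤ n) : (((n - 2 : ℕ) : ℝ)) = (n : ℝ) - 2 := by
  have : (2 : ℕ) ≤ n := by omega
  push_cast [this]; ring

lemma A1_nonneg (hn : 5 ≤ n) (hm : 1 ≤ m) (hmn : m + 2 ≤ n) (uv : ℕ) :
    ∀ p q, 0 ≤ A1 n m uv p q := by
  rintro (j | k) (j' | k')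
  · rw [A1_ll]
    exact add_nonneg (IT_nonneg (aa_nonneg hn hm hmn)) (IT_nonneg (cc1_nonneg hn hm hmn))
  · rw [A1_lr]
  · rw [A1_rl]
    exact add_nonneg (IT_nonneg (cc2_nonneg hn hm hmn)) (IT_nonneg (cc3_nonneg hn hm hmn))
  · rw [A1_rr]

lemma A1_row (hn : 5 ≤ n) (hm : 1 ≤ m) (hmn : m + 2 ≤ n) {u : Fin n} (hu : m < (u : ℕ)) :
    ∀ p, ∑ᶠ q, A1 n m (u : ℕ) p q
      = OR.rw (OR.glue n m) (.inl (⟨0, by omega⟩ : Fin n)) p := by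
  have hm2 : m ≤ n - 2 := by omega
  have huvlt : (u : ℕ) < n := u.isLt
  intro p
  rw [finsum_eq_sum_of_fintype, Fintype.sum_sum_type]
  obtain j | k := p
  · rw [mu_l hn hm hm2 j]
    rw [Finset.sum_congr rfl (fun k' _ => A1_lr (uv := (u:ℕ)) (j := j) (k' := k')),
      Finset.sum_const_zero, add_zero]
    by_cases h0 : (j : ℕ) = 0
    · have e : ∀ j' : Fin n, A1 n m (u : ℕ) (.inl j) (.inl j') = 0 := by
        intro j'
        rw [A1_ll, IT_false (aa n m) (by omega), IT_false (cc1 n m) (by omega), add_zero]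
      rw [Finset.sum_congr rfl (fun j' _ => e j'), Finset.sum_const_zero, if_neg (by omega)]
    · by_cases huv : (j : ℕ) = (u : ℕ)
      · have e : ∀ j' : Fin n, A1 n m (u : ℕ) (.inl j) (.inl j')
            = IT ((fun x => ¬ x = 0 ∧ ¬ x = (u : ℕ)) ((j' : ℕ))) (cc1 n m) := by
          intro j'
          rw [A1_ll, IT_false (aa n m) (by omega), zero_add]
          exact IT_congr _ (by constructor <;> intro h <;> omega)
        rw [Finset.sum_congr rfl (fun j' _ => e j'),
          sum_IT (fun x => ¬ x = 0 ∧ ¬ x = (u : ℕ)) _, cnt_ne_two (by omega) huvlt,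
          if_pos h0, cast_sub_two hn, I1 hn hm hmn]
        rfl
      · have e : ∀ j' : Fin n, A1 n m (u : ℕ) (.inl j) (.inl j')
            = IT ((fun x => x = (j : ℕ)) ((j' : ℕ))) (aa n m) := by
          intro j'
          rw [A1_ll, IT_false (cc1 n m) (by omega), add_zero]
          exact IT_congr _ (by constructor <;> intro h <;> omega)
        rw [Finset.sum_congr rfl (fun j' _ => e j'), sum_IT (fun x => x = (j : ℕ)) _,
          cnt_eq_single j.isLt, if_pos h0, Nat.cast_one, one_mul]
        rfl
  · rw [mu_r hn hm hm2 k]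
    rw [Finset.sum_congr rfl (fun k' _ => A1_rr (uv := (u:ℕ)) (k := k) (k' := k')),
      Finset.sum_const_zero, add_zero]
    by_cases hk : (k : ℕ) ≤ m
    · have e : ∀ j' : Fin n, A1 n m (u : ℕ) (.inr k) (.inl j')
          = IT ((fun x => x = 0) ((j' : ℕ))) (cc2 n m)
            + IT ((fun x => ¬ x = 0 ∧ ¬ x = (u : ℕ)) ((j' : ℕ))) (cc3 n m) := by
        intro j'
        rw [A1_rl]
        congr 1
        · exact IT_congr _ (by constructor <;> intro h <;> omega)
        · exact IT_congr _ (by constructor <;> intro h <;> omega)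
      rw [Finset.sum_congr rfl (fun j' _ => e j'), Finset.sum_add_distrib,
        sum_IT (fun x => x = 0) _, sum_IT (fun x => ¬ x = 0 ∧ ¬ x = (u : ℕ)) _,
        cnt_eq_single (by omega), cnt_ne_two (by omega) huvlt, if_pos hk,
        cast_sub_two hn, Nat.cast_one, one_mul, I2 hn hm hmn]
      rfl
    · have e : ∀ j' : Fin n, A1 n m (u : ℕ) (.inr k) (.inl j') = 0 := by
        intro j'
        rw [A1_rl, IT_false (cc2 n m) (by omega), IT_false (cc3 n m) (by omega), add_zero]
      rw [Finset.sum_congr rfl (fun j' _ => e j'), Finset.sum_const_zero, if_neg (by omega)]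

lemma A1_col (hn : 5 ≤ n) (hm : 1 ≤ m) (hmn : m + 2 ≤ n) {u : Fin n} (hu : m < (u : ℕ)) :
    ∀ q, ∑ᶠ p, A1 n m (u : ℕ) p q = OR.rw (OR.glue n m) (.inl u) q := by
  have huvlt : (u : ℕ) < n := u.isLt
  intro q
  rw [finsum_eq_sum_of_fintype, Fintype.sum_sum_type]
  obtain j' | k' := q
  · rw [nu_l hn hu j']
    by_cases h0 : (j' : ℕ) = 0
    · have e1 : ∀ j : Fin n, A1 n m (u : ℕ) (.inl j) (.inl j') = 0 := by
        intro j
        rw [A1_ll, IT_false (aa n m) (by omega), IT_false (cc1 n m) (by omega), add_zero]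
      have e2 : ∀ k : Fin n, A1 n m (u : ℕ) (.inr k) (.inl j')
          = IT ((fun x => x ≤ m) ((k : ℕ))) (cc2 n m) := by
        intro k
        rw [A1_rl, IT_false (cc3 n m) (by omega), add_zero]
        exact IT_congr _ (by constructor <;> intro h <;> omega)
      rw [Finset.sum_congr rfl (fun j _ => e1 j), Finset.sum_const_zero, zero_add,
        Finset.sum_congr rfl (fun k _ => e2 k), sum_IT (fun x => x ≤ m) _,
        cnt_le_m (by omega), if_pos (by omega)]
      have h2 : (((m + 1 : ℕ) : ℝ)) = (m : ℝ) + 1 := by push_cast; ring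
      rw [h2, I3 hn hm hmn]
      rfl
    · by_cases huv : (j' : ℕ) = (u : ℕ)
      · have e1 : ∀ j : Fin n, A1 n m (u : ℕ) (.inl j) (.inl j') = 0 := by
          intro j
          rw [A1_ll, IT_false (aa n m) (by omega), IT_false (cc1 n m) (by omega), add_zero]
        have e2 : ∀ k : Fin n, A1 n m (u : ℕ) (.inr k) (.inl j') = 0 := by
          intro k
          rw [A1_rl, IT_false (cc2 n m) (by omega), IT_false (cc3 n m) (by omega), add_zero]
        rw [Finset.sum_congr rfl (fun j _ => e1 j), Finset.sum_congr rfl (fun k _ => e2 k),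
          Finset.sum_const_zero, add_zero, if_neg (by omega)]
      · have e1 : ∀ j : Fin n, A1 n m (u : ℕ) (.inl j) (.inl j')
            = IT ((fun x => x = (j' : ℕ)) ((j : ℕ))) (aa n m)
              + IT ((fun x => x = (u : ℕ)) ((j : ℕ))) (cc1 n m) := by
          intro j
          rw [A1_ll]
          congr 1
          · exact IT_congr _ (by constructor <;> intro h <;> omega)
          · exact IT_congr _ (by constructor <;> intro h <;> omega)
        have e2 : ∀ k : Fin n, A1 n m (u : ℕ) (.inr k) (.inl j')
            = IT ((fun x => x ≤ m) ((k : ℕ))) (cc3 n m) := by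
          intro k
          rw [A1_rl, IT_false (cc2 n m) (by omega), zero_add]
          exact IT_congr _ (by constructor <;> intro h <;> omega)
        rw [Finset.sum_congr rfl (fun j _ => e1 j), Finset.sum_congr rfl (fun k _ => e2 k),
          Finset.sum_add_distrib, sum_IT (fun x => x = (j' : ℕ)) _,
          sum_IT (fun x => x = (u : ℕ)) _, sum_IT (fun x => x ≤ m) _,
          cnt_eq_single j'.isLt, cnt_eq_single huvlt, cnt_le_m (by omega), if_pos (by omega)]
        have h2 : (((m + 1 : ℕ) : ℝ)) = (m : ℝ) + 1 := by push_cast; ring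
        rw [h2, Nat.cast_one, one_mul, one_mul, I4 hn hm hmn]
        rfl
  · rw [nu_r hu k']
    rw [Finset.sum_congr rfl (fun j _ => A1_lr (uv := (u:ℕ)) (j := j) (k' := k')),
      Finset.sum_congr rfl (fun k _ => A1_rr (uv := (u:ℕ)) (k := k) (k' := k')),
      Finset.sum_const_zero, add_zero]

lemma A1_isCoupling (hn : 5 ≤ n) (hm : 1 ≤ m) (hmn : m + 2 ≤ n) {u : Fin n}
    (hu : m < (u : ℕ)) :
    OR.IsCoupling (OR.rw (OR.glue n m) (.inl (⟨0, by omega⟩ : Fin n)))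
      (OR.rw (OR.glue n m) (.inl u)) (A1 n m (u : ℕ)) :=
  ⟨A1_nonneg hn hm hmn (u : ℕ), Set.toFinite _, A1_row hn hm hmn hu, A1_col hn hm hmn hu⟩

end Stage7

section Stage8
variable {n m : ℕ}

lemma dist_r0 (hn : 5 ≤ n) {k j : Fin n} (hk : (k : ℕ) ≤ m) (hj : (j : ℕ) = 0) :
    (OR.glue n m).dist (.inr k) (.inl j) = 1 :=
  SimpleGraph.dist_eq_one_iff_adj.mpr (by rw [adj_rl, cross_iff]; omega)

/-- cost bound matrix for `A1`. -/
noncomputable def C1 (n m uv : ℕ) : Fin n ⊕ Fin n → Fin n ⊕ Fin n → ℝ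
  | .inl j, .inl j' => IT ((j : ℕ) = uv ∧ ¬ (j' : ℕ) = 0 ∧ ¬ (j' : ℕ) = uv) (cc1 n m)
  | .inr k, .inl j' => IT ((k : ℕ) ≤ m ∧ (j' : ℕ) = 0) (cc2 n m)
      + IT ((k : ℕ) ≤ m ∧ ¬ (j' : ℕ) = 0 ∧ ¬ (j' : ℕ) = uv) (2 * cc3 n m)
  | _, _ => 0

lemma C1_ll {uv : ℕ} {j j' : Fin n} : C1 n m uv (.inl j) (.inl j')
    = IT ((j : ℕ) = uv ∧ ¬ (j' : ℕ) = 0 ∧ ¬ (j' : ℕ) = uv) (cc1 n m) := rfl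
lemma C1_rl {uv : ℕ} {k j' : Fin n} : C1 n m uv (.inr k) (.inl j')
    = IT ((k : ℕ) ≤ m ∧ (j' : ℕ) = 0) (cc2 n m)
      + IT ((k : ℕ) ≤ m ∧ ¬ (j' : ℕ) = 0 ∧ ¬ (j' : ℕ) = uv) (2 * cc3 n m) := rfl
lemma C1_lr {uv : ℕ} {j k' : Fin n} : C1 n m uv (.inl j) (.inr k') = 0 := rfl
lemma C1_rr {uv : ℕ} {k k' : Fin n} : C1 n m uv (.inr k) (.inr k') = 0 := rfl

lemma A1_cost_pt (hn : 5 ≤ n) (hm : 1 ≤ m) (hmn : m + 2 ≤ n) {u : Fin n}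
    (hu : m < (u : ℕ)) :
    ∀ p q, A1 n m (u : ℕ) p q * ((OR.glue n m).dist p q : ℝ) ≤ C1 n m (u : ℕ) p q := by
  rintro (j | k) (j' | k')
  · rw [A1_ll, C1_ll]
    by_cases hC : (j : ℕ) = (j' : ℕ) ∧ ¬ (j : ℕ) = 0 ∧ ¬ (j : ℕ) = (u : ℕ)
    · have hjj' : j = j' := Fin.ext hC.1
      subst hjj'
      rw [SimpleGraph.dist_self, Nat.cast_zero, mul_zero]
      exact IT_nonneg (cc1_nonneg hn hm hmn)
    · rw [IT_false (aa n m) hC, zero_add]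
      by_cases hD : (j : ℕ) = (u : ℕ) ∧ ¬ (j' : ℕ) = 0 ∧ ¬ (j' : ℕ) = (u : ℕ)
      · rw [IT_pos hD, dist_ll_one hn (by omega), Nat.cast_one, mul_one]
      · rw [IT_false (cc1 n m) hD, zero_mul]
  · rw [A1_lr, C1_lr, zero_mul]
  · rw [A1_rl, C1_rl]
    by_cases hR : (k : ℕ) ≤ m ∧ (j' : ℕ) = 0
    · rw [IT_pos hR, IT_false (cc3 n m) (by omega),
        IT_false (2 * cc3 n m) (by omega), add_zero,
        dist_r0 hn hR.1 hR.2, Nat.cast_one, mul_one]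
    · rw [IT_false (cc2 n m) hR, zero_add]
      by_cases hS : (k : ℕ) ≤ m ∧ ¬ (j' : ℕ) = 0 ∧ ¬ (j' : ℕ) = (u : ℕ)
      · rw [IT_pos hS, IT_pos hS]
        have hd2 : ((OR.glue n m).dist (.inr k) (.inl j') : ℝ) ≤ 2 := by
          exact_mod_cast dist_le_two hn hS.1
        have := cc3_nonneg hn hm hmn
        nlinarith
      · rw [IT_false (cc3 n m) hS, IT_false (2 * cc3 n m) hS, zero_mul]
        norm_num
  · rw [A1_rr, C1_rr, zero_mul]

lemma C1_total (hn : 5 ≤ n) (hm : 1 ≤ m) (hmn : m + 2 ≤ n) {u : Fin n}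
    (hu : m < (u : ℕ)) :
    ∑ p : Fin n ⊕ Fin n, ∑ q : Fin n ⊕ Fin n, C1 n m (u : ℕ) p q
      = (2 * (m : ℝ) + 3) * aa n m - bb n := by
  have huvlt : (u : ℕ) < n := u.isLt
  rw [Fintype.sum_sum_type]
  have row1 : ∀ j : Fin n, ∑ q : Fin n ⊕ Fin n, C1 n m (u : ℕ) (.inl j) q
      = IT ((fun x => x = (u : ℕ)) ((j : ℕ))) (((n - 2 : ℕ) : ℝ) * cc1 n m) := by
    intro j
    rw [Fintype.sum_sum_type,
      Finset.sum_congr rfl (fun k' _ => C1_lr (uv := (u:ℕ)) (j := j) (k' := k')),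
      Finset.sum_const_zero, add_zero,
      Finset.sum_congr rfl (fun j' _ => by rw [C1_ll, IT_and]),
      sum_IT_out, sum_IT (fun x => ¬ x = 0 ∧ ¬ x = (u : ℕ)) _, cnt_ne_two (by omega) huvlt]
  have row2 : ∀ k : Fin n, ∑ q : Fin n ⊕ Fin n, C1 n m (u : ℕ) (.inr k) q
      = IT ((fun x => x ≤ m) ((k : ℕ)))
          ((1 : ℝ) * cc2 n m + ((n - 2 : ℕ) : ℝ) * (2 * cc3 n m)) := by
    intro k
    rw [Fintype.sum_sum_type,
      Finset.sum_congr rfl (fun k' _ => C1_rr (uv := (u:ℕ)) (k := k) (k' := k')),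
      Finset.sum_const_zero, add_zero,
      Finset.sum_congr rfl (fun j' _ => by
        rw [C1_rl, IT_and ((k : ℕ) ≤ m) _ (cc2 n m), IT_and ((k : ℕ) ≤ m) _ (2 * cc3 n m),
          IT_add_same]),
      sum_IT_out, Finset.sum_add_distrib, sum_IT (fun x => x = 0) _,
      sum_IT (fun x => ¬ x = 0 ∧ ¬ x = (u : ℕ)) _, cnt_eq_single (by omega),
      cnt_ne_two (by omega) huvlt, Nat.cast_one]
  rw [Finset.sum_congr rfl (fun j _ => row1 j), Finset.sum_congr rfl (fun k _ => row2 k),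
    sum_IT (fun x => x = (u : ℕ)) _, sum_IT (fun x => x ≤ m) _,
    cnt_eq_single huvlt, cnt_le_m (by omega), cast_sub_two hn, Nat.cast_one]
  have h2 : (((m + 1 : ℕ) : ℝ)) = (m : ℝ) + 1 := by push_cast; ring
  rw [h2]
  linear_combination Scost hn hm hmn

lemma W_le_gen (hn : 5 ≤ n) (hm : 1 ≤ m) (hmn : m + 2 ≤ n) {u : Fin n} (hu : m < (u : ℕ)) :
    OR.W (OR.glue n m) (OR.rw (OR.glue n m) (.inl (⟨0, by omega⟩ : Fin n)))
        (OR.rw (OR.glue n m) (.inl u))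
      ≤ (2 * (m : ℝ) + 3) * aa n m - bb n := by
  refine le_trans (OR.W_le (A1_isCoupling hn hm hmn hu)) ?_
  rw [← C1_total hn hm hmn hu]
  simp only [finsum_eq_sum_of_fintype]
  refine Finset.sum_le_sum fun p _ => Finset.sum_le_sum fun q _ => ?_
  exact A1_cost_pt hn hm hmn hu p q

lemma W_ge_gen (hn : 5 ≤ n) (hm : 1 ≤ m) (hmn : m + 2 ≤ n) {u : Fin n} (hu : m < (u : ℕ)) :
    (2 * (m : ℝ) + 2) * aa n m - bb n
      ≤ OR.W (OR.glue n m) (OR.rw (OR.glue n m) (.inl (⟨0, by omega⟩ : Fin n)))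
          (OR.rw (OR.glue n m) (.inl u)) := by
  have := OR.le_W (A1_isCoupling hn hm hmn hu) (F n m u) (F_lip hn hm hu)
  rw [sum_F_mu hn hm (by omega) hu, sum_F_nu hn hm (by omega) hu] at this
  exact this

end Stage8

section Stage9
variable {n : ℕ}

lemma cnt_pair (h : 2 < n) : cnt n (fun x => x = 1 ∨ x = 2) = 2 := by
  rw [cnt_eq inferInstance]
  have : ((Finset.range n).filter fun a => a = 1 ∨ a = 2) = {1, 2} := by
    ext a
    simp only [Finset.mem_filter, Finset.mem_range, Finset.mem_insert, Finset.mem_singleton]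
    omega
  rw [this]
  rfl

lemma cnt_Icc3 (hn : 5 ≤ n) : cnt n (fun x => 3 ≤ x ∧ x ≤ n - 2) = n - 4 := by
  rw [cnt_eq inferInstance]
  have : ((Finset.range n).filter fun a => 3 ≤ a ∧ a ≤ n - 2) = Finset.Icc 3 (n - 2) := by
    ext a
    simp only [Finset.mem_filter, Finset.mem_range, Finset.mem_Icc]
    omega
  rw [this, Nat.card_Icc]
  omega

/-- The special coupling for `m = n - 2`. -/
noncomputable def A2 (n : ℕ) : Fin n ⊕ Fin n → Fin n ⊕ Fin n → ℝ
  | .inl j, .inl j' => IT ((j : ℕ) = (j' : ℕ) ∧ ¬ (j : ℕ) = 0 ∧ ¬ (j : ℕ) = n - 1)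
        (aa n (n - 2))
      + IT ((j : ℕ) = n - 1 ∧ (j' : ℕ) = 2) (aa n (n - 2))
  | .inr k, .inl j' => IT (((k : ℕ) = 1 ∨ (k : ℕ) = 2) ∧ (j' : ℕ) = 0) (aa n (n - 2))
      + IT ((k : ℕ) = 0 ∧ (j' : ℕ) = 1) (aa n (n - 2))
      + IT ((3 ≤ (k : ℕ) ∧ (k : ℕ) ≤ n - 2) ∧ (j' : ℕ) = (k : ℕ)) (aa n (n - 2))
  | _, _ => 0

lemma A2_ll {j j' : Fin n} : A2 n (.inl j) (.inl j')
    = IT ((j : ℕ) = (j' : ℕ) ∧ ¬ (j : ℕ) = 0 ∧ ¬ (j : ℕ) = n - 1) (aa n (n - 2))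
      + IT ((j : ℕ) = n - 1 ∧ (j' : ℕ) = 2) (aa n (n - 2)) := rfl
lemma A2_rl {k j' : Fin n} : A2 n (.inr k) (.inl j')
    = IT (((k : ℕ) = 1 ∨ (k : ℕ) = 2) ∧ (j' : ℕ) = 0) (aa n (n - 2))
      + IT ((k : ℕ) = 0 ∧ (j' : ℕ) = 1) (aa n (n - 2))
      + IT ((3 ≤ (k : ℕ) ∧ (k : ℕ) ≤ n - 2) ∧ (j' : ℕ) = (k : ℕ)) (aa n (n - 2)) := rfl
lemma A2_lr {j k' : Fin n} : A2 n (.inl j) (.inr k') = 0 := rfl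
lemma A2_rr {k k' : Fin n} : A2 n (.inr k) (.inr k') = 0 := rfl

lemma J1 (hn : 5 ≤ n) : 2 * aa n (n - 2) = bb n := by
  unfold aa bb
  rw [cast_sub_two hn]
  have h5 : (5:ℝ) ≤ (n:ℝ) := by exact_mod_cast hn
  have h1 : ((n:ℝ) + ((n:ℝ) - 2)) ≠ 0 := by linarith
  have h2 : ((n:ℝ) - 1) ≠ 0 := by linarith
  field_simp
  ring

lemma two_aa (hn : 5 ≤ n) :
    aa n (n - 2) + aa n (n - 2) = ((n : ℝ) - 1)⁻¹ := by
  rw [show aa n (n - 2) + aa n (n - 2) = 2 * aa n (n - 2) by ring, J1 hn]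
  rfl

lemma A2_nonneg (hn : 5 ≤ n) : ∀ p q, 0 ≤ A2 n p q := by
  have ha : 0 ≤ aa n (n - 2) := aa_nonneg hn (by omega) (by omega)
  rintro (j | k) (j' | k')
  · exact add_nonneg (IT_nonneg ha) (IT_nonneg ha)
  · rw [A2_lr]
  · exact add_nonneg (add_nonneg (IT_nonneg ha) (IT_nonneg ha)) (IT_nonneg ha)
  · rw [A2_rr]

lemma A2_row (hn : 5 ≤ n) :
    ∀ p, ∑ᶠ q, A2 n p q
      = OR.rw (OR.glue n (n - 2)) (.inl (⟨0, by omega⟩ : Fin n)) p := by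
  intro p
  rw [finsum_eq_sum_of_fintype, Fintype.sum_sum_type]
  obtain j | k := p
  · rw [mu_l hn (by omega) (by omega) j,
      Finset.sum_congr rfl (fun k' _ => A2_lr (j := j) (k' := k')),
      Finset.sum_const_zero, add_zero]
    by_cases h0 : (j : ℕ) = 0
    · have e : ∀ j' : Fin n, A2 n (.inl j) (.inl j') = 0 := by
        intro j'
        rw [A2_ll]; unfold IT; split_ifs <;> first | ring1 | (exfalso; omega)
      rw [Finset.sum_congr rfl (fun j' _ => e j'), Finset.sum_const_zero, if_neg (by omega)]
    · by_cases hlast : (j : ℕ) = n - 1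
      · have e : ∀ j' : Fin n, A2 n (.inl j) (.inl j')
            = IT ((j' : ℕ) = 2) (aa n (n - 2)) := by
          intro j'
          rw [A2_ll]; unfold IT; split_ifs <;> first | ring1 | (exfalso; omega)
        rw [Finset.sum_congr rfl (fun j' _ => e j'), sum_IT (fun x => x = 2) _,
          cnt_eq_single (show 2 < n by omega), if_pos h0, Nat.cast_one, one_mul]
        rfl
      · have e : ∀ j' : Fin n, A2 n (.inl j) (.inl j')
            = IT ((j' : ℕ) = (j : ℕ)) (aa n (n - 2)) := by
          intro j'
          rw [A2_ll]; unfold IT; split_ifs <;> first | ring1 | (exfalso; omega)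
        rw [Finset.sum_congr rfl (fun j' _ => e j'), sum_IT (fun x => x = (j : ℕ)) _,
          cnt_eq_single j.isLt, if_pos h0, Nat.cast_one, one_mul]
        rfl
  · rw [mu_r hn (by omega) (by omega) k,
      Finset.sum_congr rfl (fun k' _ => A2_rr (k := k) (k' := k')),
      Finset.sum_const_zero, add_zero]
    by_cases hk0 : (k : ℕ) = 0
    · have e : ∀ j' : Fin n, A2 n (.inr k) (.inl j')
          = IT ((j' : ℕ) = 1) (aa n (n - 2)) := by
        intro j'
        rw [A2_rl]; unfold IT; split_ifs <;> first | ring1 | (exfalso; omega)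
      rw [Finset.sum_congr rfl (fun j' _ => e j'), sum_IT (fun x => x = 1) _,
        cnt_eq_single (show 1 < n by omega), if_pos (show (k : ℕ) ≤ n - 2 by omega),
        Nat.cast_one, one_mul]
      rfl
    · by_cases hk12 : (k : ℕ) = 1 ∨ (k : ℕ) = 2
      · have e : ∀ j' : Fin n, A2 n (.inr k) (.inl j')
            = IT ((j' : ℕ) = 0) (aa n (n - 2)) := by
          intro j'
          rw [A2_rl]; unfold IT; split_ifs <;> first | ring1 | (exfalso; omega)
        rw [Finset.sum_congr rfl (fun j' _ => e j'), sum_IT (fun x => x = 0) _,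
          cnt_eq_single (show 0 < n by omega), if_pos (show (k : ℕ) ≤ n - 2 by omega),
          Nat.cast_one, one_mul]
        rfl
      · by_cases hk3 : 3 ≤ (k : ℕ) ∧ (k : ℕ) ≤ n - 2
        · have e : ∀ j' : Fin n, A2 n (.inr k) (.inl j')
              = IT ((j' : ℕ) = (k : ℕ)) (aa n (n - 2)) := by
            intro j'
            rw [A2_rl]; unfold IT; split_ifs <;> first | ring1 | (exfalso; omega)
          rw [Finset.sum_congr rfl (fun j' _ => e j'), sum_IT (fun x => x = (k : ℕ)) _,
            cnt_eq_single k.isLt, if_pos (show (k : ℕ) ≤ n - 2 by omega),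
            Nat.cast_one, one_mul]
          rfl
        · have e : ∀ j' : Fin n, A2 n (.inr k) (.inl j') = 0 := by
            intro j'
            rw [A2_rl]; unfold IT; split_ifs <;> first | ring1 | (exfalso; omega)
          rw [Finset.sum_congr rfl (fun j' _ => e j'), Finset.sum_const_zero,
            if_neg (show ¬ (k : ℕ) ≤ n - 2 by omega)]

lemma A2_col (hn : 5 ≤ n) {u : Fin n} (hu : n - 2 < (u : ℕ)) :
    ∀ q, ∑ᶠ p, A2 n p q = OR.rw (OR.glue n (n - 2)) (.inl u) q := by
  have huval : (u : ℕ) = n - 1 := by have := u.isLt; omega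
  intro q
  rw [finsum_eq_sum_of_fintype, Fintype.sum_sum_type]
  obtain j' | k' := q
  · rw [nu_l hn hu j']
    by_cases h0 : (j' : ℕ) = 0
    · have e1 : ∀ j : Fin n, A2 n (.inl j) (.inl j') = 0 := by
        intro j
        rw [A2_ll]; unfold IT; split_ifs <;> first | ring1 | (exfalso; omega)
      have e2 : ∀ k : Fin n, A2 n (.inr k) (.inl j')
          = IT ((k : ℕ) = 1 ∨ (k : ℕ) = 2) (aa n (n - 2)) := by
        intro k
        rw [A2_rl]; unfold IT; split_ifs <;> first | ring1 | (exfalso; omega)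
      rw [Finset.sum_congr rfl (fun j _ => e1 j), Finset.sum_const_zero, zero_add,
        Finset.sum_congr rfl (fun k _ => e2 k), sum_IT (fun x => x = 1 ∨ x = 2) _,
        cnt_pair (by omega), if_pos (by omega)]
      rw [show ((2 : ℕ) : ℝ) * aa n (n - 2) = 2 * aa n (n - 2) by norm_num, J1 hn]
      rfl
    · by_cases h1 : (j' : ℕ) = 1
      · have e1 : ∀ j : Fin n, A2 n (.inl j) (.inl j')
            = IT ((j : ℕ) = 1) (aa n (n - 2)) := by
          intro j
          rw [A2_ll]; unfold IT; split_ifs <;> first | ring1 | (exfalso; omega)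
        have e2 : ∀ k : Fin n, A2 n (.inr k) (.inl j')
            = IT ((k : ℕ) = 0) (aa n (n - 2)) := by
          intro k
          rw [A2_rl]; unfold IT; split_ifs <;> first | ring1 | (exfalso; omega)
        rw [Finset.sum_congr rfl (fun j _ => e1 j), Finset.sum_congr rfl (fun k _ => e2 k),
          sum_IT (fun x => x = 1) _, sum_IT (fun x => x = 0) _,
          cnt_eq_single (show 1 < n by omega), cnt_eq_single (show 0 < n by omega),
          if_pos (by omega), Nat.cast_one, one_mul]
        exact two_aa hn
      · by_cases h2 : (j' : ℕ) = 2
        · have e1 : ∀ j : Fin n, A2 n (.inl j) (.inl j')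
              = IT ((j : ℕ) = 2) (aa n (n - 2)) + IT ((j : ℕ) = n - 1) (aa n (n - 2)) := by
            intro j
            rw [A2_ll]; unfold IT; split_ifs <;> first | ring1 | (exfalso; omega)
          have e2 : ∀ k : Fin n, A2 n (.inr k) (.inl j') = 0 := by
            intro k
            rw [A2_rl]; unfold IT; split_ifs <;> first | ring1 | (exfalso; omega)
          rw [Finset.sum_congr rfl (fun j _ => e1 j), Finset.sum_congr rfl (fun k _ => e2 k),
            Finset.sum_const_zero, add_zero, Finset.sum_add_distrib,
            sum_IT (fun x => x = 2) _, sum_IT (fun x => x = n - 1) _,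
            cnt_eq_single (show 2 < n by omega), cnt_eq_single (show n - 1 < n by omega),
            if_pos (by omega), Nat.cast_one, one_mul]
          exact two_aa hn
        · by_cases hlast : (j' : ℕ) = n - 1
          · have e1 : ∀ j : Fin n, A2 n (.inl j) (.inl j') = 0 := by
              intro j
              rw [A2_ll]; unfold IT; split_ifs <;> first | ring1 | (exfalso; omega)
            have e2 : ∀ k : Fin n, A2 n (.inr k) (.inl j') = 0 := by
              intro k
              rw [A2_rl]; unfold IT; split_ifs <;> first | ring1 | (exfalso; omega)
            rw [Finset.sum_congr rfl (fun j _ => e1 j), Finset.sum_congr rfl (fun k _ => e2 k),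
              Finset.sum_const_zero, add_zero, if_neg (by omega)]
          · have e1 : ∀ j : Fin n, A2 n (.inl j) (.inl j')
                = IT ((j : ℕ) = (j' : ℕ)) (aa n (n - 2)) := by
              intro j
              rw [A2_ll]; unfold IT; split_ifs <;> first | ring1 | (exfalso; omega)
            have e2 : ∀ k : Fin n, A2 n (.inr k) (.inl j')
                = IT ((k : ℕ) = (j' : ℕ)) (aa n (n - 2)) := by
              intro k
              rw [A2_rl]; unfold IT; split_ifs <;> first | ring1 | (exfalso; omega)
            rw [Finset.sum_congr rfl (fun j _ => e1 j), Finset.sum_congr rfl (fun k _ => e2 k),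
              sum_IT (fun x => x = (j' : ℕ)) _,
              cnt_eq_single j'.isLt, if_pos (by omega), Nat.cast_one, one_mul]
            exact two_aa hn
  · rw [nu_r hu k',
      Finset.sum_congr rfl (fun j _ => A2_lr (j := j) (k' := k')),
      Finset.sum_congr rfl (fun k _ => A2_rr (k := k) (k' := k')),
      Finset.sum_const_zero, add_zero]

lemma A2_isCoupling (hn : 5 ≤ n) {u : Fin n} (hu : n - 2 < (u : ℕ)) :
    OR.IsCoupling (OR.rw (OR.glue n (n - 2)) (.inl (⟨0, by omega⟩ : Fin n)))
      (OR.rw (OR.glue n (n - 2)) (.inl u)) (A2 n) :=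
  ⟨A2_nonneg hn, Set.toFinite _, A2_row hn, A2_col hn hu⟩

end Stage9

section Stage10
variable {n : ℕ}

lemma dist_k0 (hn : 5 ≤ n) {m : ℕ} (hm : 1 ≤ m) {k j : Fin n} (hk : (k : ℕ) = 0)
    (hj : 1 ≤ (j : ℕ) ∧ (j : ℕ) ≤ m) :
    (OR.glue n m).dist (.inr k) (.inl j) = 1 :=
  SimpleGraph.dist_eq_one_iff_adj.mpr (by rw [adj_rl, cross_iff]; omega)

lemma cast_sub_four (hn : 5 ≤ n) : (((n - 4 : ℕ) : ℝ)) = (n : ℝ) - 4 := by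
  have : (4 : ℕ) ≤ n := by omega
  push_cast [this]; ring

/-- cost bound matrix for `A2`. -/
noncomputable def C2 (n : ℕ) : Fin n ⊕ Fin n → Fin n ⊕ Fin n → ℝ
  | .inl j, .inl j' => IT ((j : ℕ) = n - 1 ∧ (j' : ℕ) = 2) (aa n (n - 2))
  | .inr k, .inl j' => IT (((k : ℕ) = 1 ∨ (k : ℕ) = 2) ∧ (j' : ℕ) = 0) (aa n (n - 2))
      + IT ((k : ℕ) = 0 ∧ (j' : ℕ) = 1) (aa n (n - 2))
      + IT ((3 ≤ (k : ℕ) ∧ (k : ℕ) ≤ n - 2) ∧ (j' : ℕ) = (k : ℕ)) (2 * aa n (n - 2))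
  | _, _ => 0

lemma C2_ll {j j' : Fin n} : C2 n (.inl j) (.inl j')
    = IT ((j : ℕ) = n - 1 ∧ (j' : ℕ) = 2) (aa n (n - 2)) := rfl
lemma C2_rl {k j' : Fin n} : C2 n (.inr k) (.inl j')
    = IT (((k : ℕ) = 1 ∨ (k : ℕ) = 2) ∧ (j' : ℕ) = 0) (aa n (n - 2))
      + IT ((k : ℕ) = 0 ∧ (j' : ℕ) = 1) (aa n (n - 2))
      + IT ((3 ≤ (k : ℕ) ∧ (k : ℕ) ≤ n - 2) ∧ (j' : ℕ) = (k : ℕ)) (2 * aa n (n - 2)) := rfl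
lemma C2_lr {j k' : Fin n} : C2 n (.inl j) (.inr k') = 0 := rfl
lemma C2_rr {k k' : Fin n} : C2 n (.inr k) (.inr k') = 0 := rfl

lemma A2_cost_pt (hn : 5 ≤ n) :
    ∀ p q, A2 n p q * ((OR.glue n (n - 2)).dist p q : ℝ) ≤ C2 n p q := by
  have ha : 0 ≤ aa n (n - 2) := aa_nonneg hn (by omega) (by omega)
  rintro (j | k) (j' | k')
  · by_cases hC : (j : ℕ) = (j' : ℕ) ∧ ¬ (j : ℕ) = 0 ∧ ¬ (j : ℕ) = n - 1
    · have hjj' : j = j' := Fin.ext hC.1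
      subst hjj'
      rw [SimpleGraph.dist_self, Nat.cast_zero, mul_zero, C2_ll]
      exact IT_nonneg ha
    · by_cases hD : (j : ℕ) = n - 1 ∧ (j' : ℕ) = 2
      · rw [A2_ll, C2_ll, IT_false (aa n (n - 2)) hC, zero_add, IT_pos hD,
          dist_ll_one hn (by omega), Nat.cast_one, mul_one]
      · rw [A2_ll, C2_ll, IT_false (aa n (n - 2)) hC, zero_add, IT_false (aa n (n - 2)) hD,
          zero_mul]
  · rw [A2_lr, C2_lr, zero_mul]
  · rw [A2_rl, C2_rl]
    by_cases hP : ((k : ℕ) = 1 ∨ (k : ℕ) = 2) ∧ (j' : ℕ) = 0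
    · rw [IT_pos hP, IT_false (aa n (n - 2)) (by omega),
        IT_false (aa n (n - 2)) (by omega), IT_false (2 * aa n (n - 2)) (by omega),
        add_zero, add_zero, dist_r0 hn (by omega) hP.2, Nat.cast_one, mul_one]
    · by_cases hQ : (k : ℕ) = 0 ∧ (j' : ℕ) = 1
      · rw [IT_false (aa n (n - 2)) hP, zero_add, IT_pos hQ,
          IT_false (aa n (n - 2)) (by omega), IT_false (2 * aa n (n - 2)) (by omega),
          dist_k0 hn (by omega) hQ.1 (by omega), Nat.cast_one, mul_one]
      · by_cases hS : (3 ≤ (k : ℕ) ∧ (k : ℕ) ≤ n - 2) ∧ (j' : ℕ) = (k : ℕ)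
        · rw [IT_false (aa n (n - 2)) hP, zero_add, IT_false (aa n (n - 2)) hQ, zero_add,
            IT_pos hS, IT_pos hS]
          have hd2 : ((OR.glue n (n - 2)).dist (.inr k) (.inl j') : ℝ) ≤ 2 := by
            exact_mod_cast dist_le_two hn hS.1.2
          nlinarith
        · rw [IT_false (aa n (n - 2)) hP, zero_add, IT_false (aa n (n - 2)) hQ, zero_add,
            IT_false (aa n (n - 2)) hS, IT_false (2 * aa n (n - 2)) hS, zero_mul]
          norm_num
  · rw [A2_rr, C2_rr, zero_mul]

lemma C2_total (hn : 5 ≤ n) :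
    ∑ p : Fin n ⊕ Fin n, ∑ q : Fin n ⊕ Fin n, C2 n p q
      = (2 * (n : ℝ) - 4) * aa n (n - 2) := by
  rw [Fintype.sum_sum_type]
  have row1 : ∀ j : Fin n, ∑ q : Fin n ⊕ Fin n, C2 n (.inl j) q
      = IT ((j : ℕ) = n - 1) ((1 : ℝ) * aa n (n - 2)) := by
    intro j
    rw [Fintype.sum_sum_type,
      Finset.sum_congr rfl (fun k' _ => C2_lr (j := j) (k' := k')),
      Finset.sum_const_zero, add_zero,
      Finset.sum_congr rfl (fun j' _ => by rw [C2_ll, IT_and]),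
      sum_IT_out, sum_IT (fun x => x = 2) _, cnt_eq_single (show 2 < n by omega),
      Nat.cast_one]
  have row2 : ∀ k : Fin n, ∑ q : Fin n ⊕ Fin n, C2 n (.inr k) q
      = IT ((k : ℕ) = 1 ∨ (k : ℕ) = 2) ((1 : ℝ) * aa n (n - 2))
        + IT ((k : ℕ) = 0) ((1 : ℝ) * aa n (n - 2))
        + IT (3 ≤ (k : ℕ) ∧ (k : ℕ) ≤ n - 2) ((1 : ℝ) * (2 * aa n (n - 2))) := by
    intro k
    rw [Fintype.sum_sum_type,
      Finset.sum_congr rfl (fun k' _ => C2_rr (k := k) (k' := k')),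
      Finset.sum_const_zero, add_zero,
      Finset.sum_congr rfl (fun j' _ => by rw [C2_rl, IT_and, IT_and ((k : ℕ) = 0),
        IT_and (3 ≤ (k : ℕ) ∧ (k : ℕ) ≤ n - 2)]),
      Finset.sum_add_distrib, Finset.sum_add_distrib, sum_IT_out, sum_IT_out, sum_IT_out,
      sum_IT (fun x => x = 0) _, sum_IT (fun x => x = 1) _, sum_IT (fun x => x = (k : ℕ)) _,
      cnt_eq_single (show 0 < n by omega), cnt_eq_single (show 1 < n by omega),
      cnt_eq_single k.isLt, Nat.cast_one]
  rw [Finset.sum_congr rfl (fun j _ => row1 j), Finset.sum_congr rfl (fun k _ => row2 k),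
    Finset.sum_add_distrib, Finset.sum_add_distrib,
    sum_IT (fun x => x = n - 1) _, sum_IT (fun x => x = 1 ∨ x = 2) _,
    sum_IT (fun x => x = 0) _, sum_IT (fun x => 3 ≤ x ∧ x ≤ n - 2) _,
    cnt_eq_single (show n - 1 < n by omega), cnt_pair (by omega),
    cnt_eq_single (show 0 < n by omega), cnt_Icc3 hn, cast_sub_four hn, Nat.cast_one]
  push_cast
  ring

lemma W_le_sp (hn : 5 ≤ n) {u : Fin n} (hu : n - 2 < (u : ℕ)) :
    OR.W (OR.glue n (n - 2)) (OR.rw (OR.glue n (n - 2)) (.inl (⟨0, by omega⟩ : Fin n)))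
        (OR.rw (OR.glue n (n - 2)) (.inl u))
      ≤ (2 * (n : ℝ) - 4) * aa n (n - 2) := by
  refine le_trans (OR.W_le (A2_isCoupling hn hu)) ?_
  rw [← C2_total hn]
  simp only [finsum_eq_sum_of_fintype]
  exact Finset.sum_le_sum fun p _ => Finset.sum_le_sum fun q _ => A2_cost_pt hn p q

end Stage10

end GlueAux

theorem glue_ricci_u0_to_far (n m : ℕ) (hn : 5 ≤ n) (hm : 1 ≤ m) (hm' : m ≤ n - 2) :
    ∀ u : Fin n, m < (u : ℕ) →
      (OR.ricci (OR.glue n m) (Sum.inl (⟨0, by omega⟩ : Fin n)) (Sum.inl u)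
          ≤ ((2 - (n : ℝ)) * m + n ^ 2 - 2 * n + 2) / (((n : ℝ) - 1) * (n + m)) ∧
      (m < n - 2 → ((2 - (n : ℝ)) * m + n ^ 2 - 3 * n + 3) / (((n : ℝ) - 1) * (n + m))
          ≤ OR.ricci (OR.glue n m) (Sum.inl (⟨0, by omega⟩ : Fin n)) (Sum.inl u)) ∧
      (m = n - 2 → 1 / ((n : ℝ) - 1)
          ≤ OR.ricci (OR.glue n m) (Sum.inl (⟨0, by omega⟩ : Fin n)) (Sum.inl u)) ∧
      0 ≤ OR.ricci (OR.glue n m) (Sum.inl (⟨0, by omega⟩ : Fin n)) (Sum.inl u)) := by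
  intro u hu
  have hmn : m + 2 ≤ n := by omega
  obtain ⟨h1, h2, h3, h4, h5⟩ := GlueAux.real_facts hn hm hmn
  have h0v : ((⟨0, by omega⟩ : Fin n) : ℕ) = 0 := rfl
  have hd : (OR.glue n m).dist (Sum.inl (⟨0, by omega⟩ : Fin n)) (Sum.inl u) = 1 :=
    GlueAux.dist_ll_one hn (by rw [h0v]; omega)
  have hricci : OR.ricci (OR.glue n m) (Sum.inl (⟨0, by omega⟩ : Fin n)) (Sum.inl u)
      = 1 - OR.W (OR.glue n m)
          (OR.rw (OR.glue n m) (Sum.inl (⟨0, by omega⟩ : Fin n)))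
          (OR.rw (OR.glue n m) (Sum.inl u)) := by
    rw [OR.ricci, hd]
    norm_num
  have hub := GlueAux.W_le_gen hn hm hmn hu
  have hlb := GlueAux.W_ge_gen hn hm hmn hu
  have haa : GlueAux.aa n m = ((n : ℝ) + m)⁻¹ := rfl
  have hbb : GlueAux.bb n = ((n : ℝ) - 1)⁻¹ := rfl
  have e1 : 1 - ((2 * (m:ℝ) + 2) * GlueAux.aa n m - GlueAux.bb n)
      = ((2 - (n : ℝ)) * m + n ^ 2 - 2 * n + 2) / (((n : ℝ) - 1) * (n + m)) := by
    rw [haa, hbb]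
    field_simp
    ring
  have e2 : 1 - ((2 * (m:ℝ) + 3) * GlueAux.aa n m - GlueAux.bb n)
      = ((2 - (n : ℝ)) * m + n ^ 2 - 3 * n + 3) / (((n : ℝ) - 1) * (n + m)) := by
    rw [haa, hbb]
    field_simp
    ring
  have hnum : (0:ℝ) ≤ (2 - (n : ℝ)) * m + n ^ 2 - 3 * n + 3 := by nlinarith
  have hden : (0:ℝ) < ((n : ℝ) - 1) * (n + m) := mul_pos h1 h3
  refine ⟨?_, ?_, ?_, ?_⟩
  · rw [hricci]
    linarith
  · intro _
    rw [hricci]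
    linarith
  · intro hm2
    subst hm2
    have hsp := GlueAux.W_le_sp hn hu
    have e3 : 1 - (2 * (n : ℝ) - 4) * GlueAux.aa n (n - 2) = 1 / ((n : ℝ) - 1) := by
      unfold GlueAux.aa
      rw [GlueAux.cast_sub_two hn]
      have hz1 : ((n:ℝ) + ((n:ℝ) - 2)) ≠ 0 := by linarith
      have hz2 : ((n:ℝ) - 1) ≠ 0 := by linarith
      field_simp
      ring
    rw [hricci]
    linarith
  · rw [hricci]
    have := div_nonneg hnum (le_of_lt hden)
    linarith
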